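/- arXiv:2002.09959 — 6 statements merged into one kernel-verified Lean document; each statement's English description precedes it below -/
import Mathlib

section
/- The 1-forms α = (f_y + 1) η³, β = (f_y + 1) η² + 2 f_p η³, and δ = −(f_y − 1) η¹ are the unique smooth 1-forms on Σ satisfying the first structure equations dη¹ = α∧η² + β∧η³, dη² = −α∧η¹ + δ∧η³, dη³ = −β∧η¹ − δ∧η²; i.e. the skew-symmetric matrix θ with θ¹₂ = −α, θ¹₃ = −β, θ²₃ = −δ is the connection form of the Levi-Civita connection of g in the orthonormal coframe (η¹, η², η³). -/
/-!
Concrete model of the geometry of a second order ODE  y'' = f(x, y, y')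
on Σ = ℝ³ with coordinates (x, y, p):

* a vector field is given by its components w.r.t. (∂x, ∂y, ∂p);
* a 1-form by its components w.r.t. (dx, dy, dp);
* a 2-form by its components w.r.t. (dy∧dp, dp∧dx, dx∧dy);
* a 3-form by its coefficient w.r.t. dx∧dy∧dp.
-/

noncomputable section

/-- Points of Σ = ℝ³ with coordinates (x, y, p). -/
abbrev Pt : Type := ℝ × ℝ × ℝ

/-- Componentwise dot product of triples. -/
def dot (a b : Pt) : ℝ := a.1 * b.1 + a.2.1 * b.2.1 + a.2.2 * b.2.2

/-- Componentwise cross product of triples. -/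
def cross (a b : Pt) : Pt :=
  (a.2.1 * b.2.2 - a.2.2 * b.2.1,
   a.2.2 * b.1 - a.1 * b.2.2,
   a.1 * b.2.1 - a.2.1 * b.1)

/-- Partial derivative ∂/∂x. -/
def pdx (F : Pt → ℝ) (q : Pt) : ℝ := fderiv ℝ F q (1, 0, 0)
/-- Partial derivative ∂/∂y. -/
def pdy (F : Pt → ℝ) (q : Pt) : ℝ := fderiv ℝ F q (0, 1, 0)
/-- Partial derivative ∂/∂p. -/
def pdp (F : Pt → ℝ) (q : Pt) : ℝ := fderiv ℝ F q (0, 0, 1)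

/-- A 1-form: components w.r.t. (dx, dy, dp). -/
abbrev Form1 : Type := Pt → Pt
/-- A 2-form: components w.r.t. (dy∧dp, dp∧dx, dx∧dy). -/
abbrev Form2 : Type := Pt → Pt
/-- A 3-form: coefficient w.r.t. dx∧dy∧dp. -/
abbrev Form3 : Type := Pt → ℝ
/-- A vector field: components w.r.t. (∂x, ∂y, ∂p). -/
abbrev VF : Type := Pt → Pt

/-- Smoothness (C^∞) of a real function on Σ. -/
def SmoothFn (F : Pt → ℝ) : Prop := ContDiff ℝ (⊤ : ℕ∞) F
/-- Smoothness (C^∞) of a vector field on Σ. -/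
def SmoothVF (X : VF) : Prop := ContDiff ℝ (⊤ : ℕ∞) X
/-- Smoothness (C^∞) of a 1-form on Σ. -/
def SmoothForm1 (ω : Form1) : Prop := ContDiff ℝ (⊤ : ℕ∞) ω

/-- Exterior derivative of a function. -/
def dFun (F : Pt → ℝ) : Form1 := fun q => (pdx F q, pdy F q, pdp F q)

/-- Exterior derivative of a 1-form (the "curl", in the bases above). -/
def d1 (ω : Form1) : Form2 := fun q =>
  (pdy (fun r => (ω r).2.2) q - pdp (fun r => (ω r).2.1) q,
   pdp (fun r => (ω r).1) q - pdx (fun r => (ω r).2.2) q,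
   pdx (fun r => (ω r).2.1) q - pdy (fun r => (ω r).1) q)

/-- Wedge product of two 1-forms. -/
def w11 (ω τ : Form1) : Form2 := fun q => cross (ω q) (τ q)

/-- Wedge product of a 1-form and a 2-form. -/
def w12 (ω : Form1) (σ : Form2) : Form3 := fun q => dot (ω q) (σ q)

/-- Evaluation of a 1-form on a vector field. -/
def ev1 (ω : Form1) (X : VF) : Pt → ℝ := fun q => dot (ω q) (X q)

/-- Evaluation of a 2-form on a pair of vector fields. -/
def ev2 (σ : Form2) (X Y : VF) : Pt → ℝ := fun q => dot (σ q) (cross (X q) (Y q))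

/-- Lie bracket of vector fields: [X,Y]^i = X^j ∂_j Y^i − Y^j ∂_j X^i. -/
def lie (X Y : VF) : VF := fun q => fderiv ℝ Y q (X q) - fderiv ℝ X q (Y q)

/-- Derivative of a function along a vector field: X(F). -/
def vderiv (X : VF) (F : Pt → ℝ) : Pt → ℝ := fun q => fderiv ℝ F q (X q)

/-- η¹ = (1/2) dx. -/
def η1 : Form1 := fun _ => (1/2, 0, 0)
/-- η² = (1/2)(dy − p dx). -/
def η2 : Form1 := fun q => (-q.2.2/2, 1/2, 0)
/-- η³ = (1/2)(dp − f dx). -/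
def η3 (f : Pt → ℝ) : Form1 := fun q => (-f q/2, 0, 1/2)

/-- ξ₁ = 2(∂x + p ∂y + f ∂p). -/
def ξ1 (f : Pt → ℝ) : VF := fun q => (2, 2 * q.2.2, 2 * f q)
/-- ξ₂ = 2 ∂y. -/
def ξ2 : VF := fun _ => (0, 2, 0)
/-- ξ₃ = 2 ∂p. -/
def ξ3 : VF := fun _ => (0, 0, 2)

/-- Pointwise value of the Riemannian metric g = η¹⊗η¹ + η²⊗η² + η³⊗η³. -/
def gVal (f : Pt → ℝ) (q : Pt) (v w : Pt) : ℝ :=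
  dot (η1 q) v * dot (η1 q) w + dot (η2 q) v * dot (η2 q) w +
    dot (η3 f q) v * dot (η3 f q) w

/-- The metric applied to vector fields. -/
def gMet (f : Pt → ℝ) (X Y : VF) : Pt → ℝ := fun q => gVal f q (X q) (Y q)

/-- The volume form vol_g = η¹ ∧ η² ∧ η³. -/
def volg (f : Pt → ℝ) : Form3 := w12 η1 (w11 η2 (η3 f))

/-- Pointwise action of the (1,1)-tensor φ = η³⊗ξ₁ − η¹⊗ξ₃. -/
def phiAt (f : Pt → ℝ) (q : Pt) (v : Pt) : Pt :=
  dot (η3 f q) v • ξ1 f q - dot (η1 q) v • ξ3 q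

/-- The tensor φ applied to a vector field. -/
def phi (f : Pt → ℝ) (X : VF) : VF := fun q => phiAt f q (X q)

/-- The Koszul expression, equal to 2·g(∇_X Y, Z) for the Levi-Civita connection ∇ of g. -/
def koszul (f : Pt → ℝ) (X Y Z : VF) : Pt → ℝ := fun q =>
  vderiv X (gMet f Y Z) q + vderiv Y (gMet f X Z) q - vderiv Z (gMet f X Y) q
    + gMet f (lie X Y) Z q - gMet f (lie X Z) Y q - gMet f (lie Y Z) X q

/-- The Levi-Civita connection of g, recovered from the Koszul formula through the
    g-orthonormal frame (ξ₁, ξ₂, ξ₃): ∇_X Y = Σ_k g(∇_X Y, ξ_k) ξ_k. -/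
def nabla (f : Pt → ℝ) (X Y : VF) : VF := fun q =>
  (koszul f X Y (ξ1 f) q / 2) • ξ1 f q + (koszul f X Y ξ2 q / 2) • ξ2 q
    + (koszul f X Y ξ3 q / 2) • ξ3 q

/-- The g-gradient of a function, through the g-orthonormal frame (ξ₁, ξ₂, ξ₃):
    ∇F = Σ_k (ξ_k F) ξ_k, the unique field with g(∇F, X) = dF(X). -/
def grad (f : Pt → ℝ) (F : Pt → ℝ) : VF := fun q =>
  vderiv (ξ1 f) F q • ξ1 f q + vderiv ξ2 F q • ξ2 q + vderiv ξ3 F q • ξ3 q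

/-- The cross product of g: the unique field with g(X ×_g Y, Z) = vol_g(X, Y, Z),
    recovered through the g-orthonormal frame (ξ₁, ξ₂, ξ₃). -/
def crossg (f : Pt → ℝ) (X Y : VF) : VF := fun q =>
  (volg f q * dot (cross (X q) (Y q)) (ξ1 f q)) • ξ1 f q
    + (volg f q * dot (cross (X q) (Y q)) (ξ2 q)) • ξ2 q
    + (volg f q * dot (cross (X q) (Y q)) (ξ3 q)) • ξ3 q

/-- The connection 1-form α = (f_y + 1) η³. -/
def alph (f : Pt → ℝ) : Form1 := fun q => (pdy f q + 1) • η3 f q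
/-- The connection 1-form β = (f_y + 1) η² + 2 f_p η³. -/
def bet (f : Pt → ℝ) : Form1 := fun q => (pdy f q + 1) • η2 q + (2 * pdp f q) • η3 f q
/-- The connection 1-form δ = −(f_y − 1) η¹. -/
def delt (f : Pt → ℝ) : Form1 := fun q => (-(pdy f q - 1)) • η1 q

/-- The first structure equations dη_g = −θ ∧ η_g for the skew-symmetric matrix θ with
θ¹₂ = −α, θ¹₃ = −β, θ²₃ = −δ, i.e. dη¹ = α∧η² + β∧η³, dη² = −α∧η¹ + δ∧η³,
dη³ = −β∧η¹ − δ∧η². -/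
def FirstStructureEqs (f : Pt → ℝ) (α β δ : Form1) : Prop :=
  (∀ q, d1 η1 q = w11 α η2 q + w11 β (η3 f) q) ∧
  (∀ q, d1 η2 q = -(w11 α η1 q) + w11 δ (η3 f) q) ∧
  (∀ q, d1 (η3 f) q = -(w11 β η1 q) - w11 δ η2 q)

/-!
Since dη¹ = 0, dη² = ½ dx∧dp and dη³ = ½ f_y dx∧dy + ½ f_p dx∧dp, the structure equations for
α, β, δ reduce to pointwise polynomial identities. Uniqueness only uses that (η¹, η², η³) is a
coframe: the differences a, b, c of two solutions satisfy the homogeneous system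
a∧η² + b∧η³ = 0, −a∧η¹ + c∧η³ = 0, −b∧η¹ − c∧η² = 0, and wedging each equation with η¹, η², η³
gives nine linear relations that force every coefficient of a, b, c in the coframe to vanish.
-/

theorem cross_sub_left (a b c : Pt) : cross (a - b) c = cross a c - cross b c := by
  simp only [cross, Prod.fst_sub, Prod.snd_sub, Prod.mk_sub_mk]
  ext <;> ring

theorem dot_cross_smul_eq (a e₁ e₂ e₃ : Pt) :
    dot e₁ (cross e₂ e₃) • a =
      dot a (cross e₂ e₃) • e₁ + dot a (cross e₃ e₁) • e₂ + dot a (cross e₁ e₂) • e₃ := by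
  ext <;> simp only [dot, cross, Prod.smul_fst, Prod.smul_snd, Prod.fst_add, Prod.snd_add,
    smul_eq_mul] <;> ring

theorem eq_zero_of_dot_cross_eq_zero {a e₁ e₂ e₃ : Pt} (he : dot e₁ (cross e₂ e₃) ≠ 0)
    (h₁ : dot a (cross e₂ e₃) = 0) (h₂ : dot a (cross e₃ e₁) = 0)
    (h₃ : dot a (cross e₁ e₂) = 0) : a = 0 := by
  have := dot_cross_smul_eq a e₁ e₂ e₃
  rw [h₁, h₂, h₃] at this
  simpa [he] using this

theorem eq_zero_of_structure_eqs_eq_zero {a b c e₁ e₂ e₃ : Pt}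
    (he : dot e₁ (cross e₂ e₃) ≠ 0) (h₁ : cross a e₂ + cross b e₃ = 0)
    (h₂ : -cross a e₁ + cross c e₃ = 0) (h₃ : -cross b e₁ - cross c e₂ = 0) :
    a = 0 ∧ b = 0 ∧ c = 0 := by
  have dot_eq_zero {u : Pt} (hu : u = 0) (e : Pt) : dot e u = 0 := by simp [hu, dot]
  have I₁ := dot_eq_zero h₁ e₁
  have I₂ := dot_eq_zero h₁ e₂
  have I₃ := dot_eq_zero h₁ e₃
  have II₁ := dot_eq_zero h₂ e₁
  have II₂ := dot_eq_zero h₂ e₂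
  have II₃ := dot_eq_zero h₂ e₃
  have III₁ := dot_eq_zero h₃ e₁
  have III₂ := dot_eq_zero h₃ e₂
  have III₃ := dot_eq_zero h₃ e₃
  simp only [dot, cross, Prod.fst_add, Prod.snd_add, Prod.fst_neg, Prod.snd_neg, Prod.fst_sub,
    Prod.snd_sub] at I₁ I₂ I₃ II₁ II₂ II₃ III₁ III₂ III₃
  -- I₁, II₂, III₃ say x = y, x = -z, y = z for the coordinates x = a·(e₁×e₂), y = b·(e₃×e₁),
  -- z = c·(e₂×e₃); the other six equations each kill one coordinate outright.
  refine ⟨eq_zero_of_dot_cross_eq_zero he ?a₁ ?a₂ ?a₃, eq_zero_of_dot_cross_eq_zero he ?b₁ ?b₂ ?b₃,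
    eq_zero_of_dot_cross_eq_zero he ?c₁ ?c₂ ?c₃⟩ <;> simp only [dot, cross]
  case a₁ => linear_combination I₃
  case a₂ => linear_combination II₃
  case a₃ => linear_combination -(I₁ + II₂ - III₃) / 2
  case b₁ => linear_combination -I₂
  case b₂ => linear_combination (I₁ - II₂ + III₃) / 2
  case b₃ => linear_combination -III₂
  case c₁ => linear_combination (I₁ - II₂ - III₃) / 2
  case c₂ => linear_combination II₁
  case c₃ => linear_combination III₁

theorem dot_η1_cross_η2_η3 (f : Pt → ℝ) (q : Pt) :
    dot (η1 q) (cross (η2 q) (η3 f q)) = 1 / 8 := by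
  simp only [dot, cross, η1, η2, η3]; ring

theorem fderiv_neg_div_two_apply {E : Type*} [NormedAddCommGroup E] [NormedSpace ℝ E]
    {g : E → ℝ} {q : E} (hg : DifferentiableAt ℝ g q) (v : E) :
    fderiv ℝ (fun r => -g r / 2) q v = -fderiv ℝ g q v / 2 := by
  simp [div_eq_mul_inv, fderiv_mul_const hg, mul_comm]

theorem fderiv_snd_snd_apply (q v : Pt) : fderiv ℝ (fun r : Pt => r.2.2) q v = v.2.2 := by
  rw [fderiv.snd (f₂ := Prod.snd) differentiableAt_snd, fderiv_snd]
  rfl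

theorem d1_η1 (q : Pt) : d1 η1 q = (0, 0, 0) := by
  simp [d1, η1, pdx, pdy, pdp]

theorem d1_η2 (q : Pt) : d1 η2 q = (0, -1 / 2, 0) := by
  have hp : DifferentiableAt ℝ (fun r : Pt => r.2.2) q := by fun_prop
  simp [d1, η2, pdx, pdy, pdp, fderiv_neg_div_two_apply hp, fderiv_snd_snd_apply]

theorem d1_η3 {f : Pt → ℝ} {q : Pt} (hf : DifferentiableAt ℝ f q) :
    d1 (η3 f) q = (0, -pdp f q / 2, pdy f q / 2) := by
  simp only [d1, η3, pdx, pdy, pdp, fderiv_neg_div_two_apply hf]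
  simp [neg_div]

theorem ContDiff.fderiv_apply_const {E F : Type*} [NormedAddCommGroup E] [NormedSpace ℝ E]
    [NormedAddCommGroup F] [NormedSpace ℝ F] {g : E → F} (hg : ContDiff ℝ (⊤ : ℕ∞) g) (v : E) :
    ContDiff ℝ (⊤ : ℕ∞) (fun q => fderiv ℝ g q v) :=
  (hg.fderiv_right (by exact_mod_cast le_top)).clm_apply contDiff_const

theorem contDiff_η2 : ContDiff ℝ (⊤ : ℕ∞) η2 := by
  unfold η2; fun_prop

theorem contDiff_η3 {f : Pt → ℝ} (hf : ContDiff ℝ (⊤ : ℕ∞) f) : ContDiff ℝ (⊤ : ℕ∞) (η3 f) := by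
  unfold η3; fun_prop

section Smooth

variable {f : Pt → ℝ} (hf : ContDiff ℝ (⊤ : ℕ∞) f)
include hf

theorem smoothForm1_alph : SmoothForm1 (alph f) :=
  ((hf.fderiv_apply_const _).add contDiff_const).smul (contDiff_η3 hf)

theorem smoothForm1_bet : SmoothForm1 (bet f) :=
  (((hf.fderiv_apply_const _).add contDiff_const).smul contDiff_η2).add
    ((contDiff_const.mul (hf.fderiv_apply_const _)).smul (contDiff_η3 hf))

theorem smoothForm1_delt : SmoothForm1 (delt f) :=
  ((hf.fderiv_apply_const _).sub contDiff_const).neg.smul contDiff_const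

end Smooth

theorem firstStructureEqs_alph_bet_delt {f : Pt → ℝ} (hf : Differentiable ℝ f) :
    FirstStructureEqs f (alph f) (bet f) (delt f) := by
  refine ⟨fun q => ?_, fun q => ?_, fun q => ?_⟩ <;>
    simp only [d1_η1, d1_η2, d1_η3 (hf _)] <;>
    simp only [w11, cross, alph, bet, delt, η1, η2, η3, Prod.smul_mk, smul_eq_mul,
      Prod.mk_add_mk, Prod.neg_mk, Prod.mk_sub_mk, Prod.mk.injEq] <;>
    exact ⟨by ring, by ring, by ring⟩

theorem FirstStructureEqs.unique {f : Pt → ℝ} {α β δ α' β' δ' : Form1}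
    (h : FirstStructureEqs f α β δ) (h' : FirstStructureEqs f α' β' δ') :
    α = α' ∧ β = β' ∧ δ = δ' := by
  simp only [FirstStructureEqs, w11] at h h'
  obtain ⟨h₁, h₂, h₃⟩ := h
  obtain ⟨h₁', h₂', h₃'⟩ := h'
  have hq : ∀ q, α q - α' q = 0 ∧ β q - β' q = 0 ∧ δ q - δ' q = 0 := fun q =>
    eq_zero_of_structure_eqs_eq_zero (e₁ := η1 q) (e₂ := η2 q) (e₃ := η3 f q)
      (by norm_num [dot_η1_cross_η2_η3])
      (by simp only [cross_sub_left]; linear_combination h₁' q - h₁ q)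
      (by simp only [cross_sub_left]; linear_combination h₂' q - h₂ q)
      (by simp only [cross_sub_left]; linear_combination h₃' q - h₃ q)
  simp only [sub_eq_zero] at hq
  exact ⟨funext fun q => (hq q).1, funext fun q => (hq q).2.1, funext fun q => (hq q).2.2⟩

/-- α = (f_y+1)η³, β = (f_y+1)η² + 2f_p η³, δ = −(f_y−1)η¹ are the unique
smooth 1-forms satisfying the first structure equations; i.e. the skew-symmetric matrix
θ built from them is the connection form of the Levi-Civita connection of g in the
orthonormal coframe (η¹, η², η³). -/
theorem connection_form (f : Pt → ℝ) (hf : ContDiff ℝ (⊤ : ℕ∞) f) :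
    (SmoothForm1 (alph f) ∧ SmoothForm1 (bet f) ∧ SmoothForm1 (delt f) ∧
      FirstStructureEqs f (alph f) (bet f) (delt f)) ∧
    (∀ α β δ : Form1, SmoothForm1 α → SmoothForm1 β → SmoothForm1 δ →
      FirstStructureEqs f α β δ → α = alph f ∧ β = bet f ∧ δ = delt f) := by
  have hθ := firstStructureEqs_alph_bet_delt (hf.differentiable (by simp))
  exact ⟨⟨smoothForm1_alph hf, smoothForm1_bet hf, smoothForm1_delt hf, hθ⟩,
    fun _ _ _ _ _ _ h => h.unique hθ⟩
end
end

section
/- The Levi-Civita connection ∇ of g acts on the orthonormal frame (ξ₁, ξ₂, ξ₃) by: ∇_{ξ₁}ξ₁ = 0, ∇_{ξ₁}ξ₂ = −(f_y − 1)ξ₃, ∇_{ξ₁}ξ₃ = (f_y − 1)ξ₂, ∇_{ξ₂}ξ₁ = (f_y + 1)ξ₃, ∇_{ξ₂}ξ₂ = 0, ∇_{ξ₂}ξ₃ = −(f_y + 1)ξ₁, ∇_{ξ₃}ξ₁ = (f_y + 1)ξ₂ + 2 f_p ξ₃, ∇_{ξ₃}ξ₂ = −(f_y + 1)ξ₁,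 ∇_{ξ₃}ξ₃ = −2 f_p ξ₁. -/
/-!
Concrete model of the geometry of a second order ODE  y'' = f(x, y, y')
on Σ = ℝ³ with coordinates (x, y, p):

* a vector field is given by its components w.r.t. (∂x, ∂y, ∂p);
* a 1-form by its components w.r.t. (dx, dy, dp);
* a 2-form by its components w.r.t. (dy∧dp, dp∧dx, dx∧dy);
* a 3-form by its coefficient w.r.t. dx∧dy∧dp.
-/

noncomputable section

/-- `IsLC f X Y W` says that W = ∇_X Y for the Levi-Civita connection ∇ of g, expressed
through the Koszul formula: 2 g(W, Z) = Koszul(X, Y, Z) for all smooth vector fields Z. -/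
def IsLC (f : Pt → ℝ) (X Y W : VF) : Prop :=
  ∀ Z : VF, SmoothVF Z → ∀ q, 2 * gVal f q (W q) (Z q) = koszul f X Y Z q

/-!
The Koszul expression is `C^∞`-linear in its last argument, so `∇_X Y = W` only has to be
tested against the frame fields, after writing `Z = Σ η^k(Z) ξ_k`. Against the frame itself all
metric coefficients are constant, and the Koszul expression reduces to the structure constants
`[ξ₁, ξ₂] = -2 f_y ξ₃`, `[ξ₁, ξ₃] = -2 ξ₂ - 2 f_p ξ₃`, `[ξ₂, ξ₃] = 0`.
-/

lemma gVal_comm (f : Pt → ℝ) (q v w : Pt) : gVal f q v w = gVal f q w v := by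
  unfold gVal; ring

lemma gVal_add_right (f : Pt → ℝ) (q v w w' : Pt) :
    gVal f q v (w + w') = gVal f q v w + gVal f q v w' := by
  simp only [gVal, dot, Prod.fst_add, Prod.snd_add]; ring

lemma gVal_smul_right (f : Pt → ℝ) (q v w : Pt) (c : ℝ) :
    gVal f q v (c • w) = c * gVal f q v w := by
  simp only [gVal, dot, Prod.smul_fst, Prod.smul_snd, smul_eq_mul]; ring

lemma gVal_add_left (f : Pt → ℝ) (q v v' w : Pt) :
    gVal f q (v + v') w = gVal f q v w + gVal f q v' w := by
  rw [gVal_comm, gVal_add_right, gVal_comm f q w, gVal_comm f q w]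

lemma gVal_smul_left (f : Pt → ℝ) (q v w : Pt) (c : ℝ) :
    gVal f q (c • v) w = c * gVal f q v w := by
  rw [gVal_comm, gVal_smul_right, gVal_comm]

section Koszul

variable {f : Pt → ℝ} {X Y Z Z' : Pt → Pt} {a F G : Pt → ℝ} {q : Pt}

lemma differentiable_gMet (hf : Differentiable ℝ f) (hX : Differentiable ℝ X)
    (hY : Differentiable ℝ Y) : Differentiable ℝ (gMet f X Y) := by
  unfold gMet gVal dot η1 η2 η3; fun_prop

lemma vderiv_const (X : Pt → Pt) (c : ℝ) : vderiv X (fun _ => c) = 0 := by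
  funext q; simp [vderiv]

lemma vderiv_add (hF : DifferentiableAt ℝ F q) (hG : DifferentiableAt ℝ G q) :
    vderiv X (F + G) q = vderiv X F q + vderiv X G q := by
  simp [vderiv, fderiv_add hF hG]

lemma vderiv_mul (ha : DifferentiableAt ℝ a q) (hF : DifferentiableAt ℝ F q) :
    vderiv X (fun r => a r * F r) q = vderiv X a q * F q + a q * vderiv X F q := by
  simp [vderiv, fderiv_fun_mul ha hF]; ring

lemma vderiv_add_field (F : Pt → ℝ) (Z Z' : Pt → Pt) (q : Pt) :
    vderiv (Z + Z') F q = vderiv Z F q + vderiv Z' F q := by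
  simp [vderiv]

lemma vderiv_smul_field (F a : Pt → ℝ) (Z : Pt → Pt) (q : Pt) :
    vderiv (fun r => a r • Z r) F q = a q * vderiv Z F q := by
  simp [vderiv]

lemma lie_add_right (hZ : DifferentiableAt ℝ Z q) (hZ' : DifferentiableAt ℝ Z' q) :
    lie X (Z + Z') q = lie X Z q + lie X Z' q := by
  simp only [lie, fderiv_add hZ hZ', Pi.add_apply, map_add, add_apply]; abel

lemma lie_smul_right (ha : DifferentiableAt ℝ a q) (hZ : DifferentiableAt ℝ Z q) :
    lie X (fun r => a r • Z r) q = vderiv X a q • Z q + a q • lie X Z q := by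
  simp only [lie, vderiv, fderiv_fun_smul ha hZ, map_smul, add_apply,
    smul_apply, ContinuousLinearMap.smulRight_apply, smul_sub]; abel

variable (hf : Differentiable ℝ f) (hX : Differentiable ℝ X) (hY : Differentiable ℝ Y)
include hf hX hY

theorem koszul_add_right (hZ : Differentiable ℝ Z) (hZ' : Differentiable ℝ Z') :
    koszul f X Y (Z + Z') q = koszul f X Y Z q + koszul f X Y Z' q := by
  have hgY : gMet f Y (Z + Z') = gMet f Y Z + gMet f Y Z' := by
    funext r; exact gVal_add_right f r _ _ _
  have hgX : gMet f X (Z + Z') = gMet f X Z + gMet f X Z' := by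
    funext r; exact gVal_add_right f r _ _ _
  unfold koszul
  rw [hgY, hgX, vderiv_add (differentiable_gMet hf hY hZ q) (differentiable_gMet hf hY hZ' q),
    vderiv_add (differentiable_gMet hf hX hZ q) (differentiable_gMet hf hX hZ' q),
    vderiv_add_field]
  simp only [gMet, Pi.add_apply, lie_add_right (hZ q) (hZ' q), gVal_add_left, gVal_add_right]
  ring

theorem koszul_smul_right (ha : Differentiable ℝ a) (hZ : Differentiable ℝ Z) :
    koszul f X Y (fun r => a r • Z r) q = a q * koszul f X Y Z q := by
  have hgY : gMet f Y (fun r => a r • Z r) = fun r => a r * gMet f Y Z r := by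
    funext r; exact gVal_smul_right f r _ _ _
  have hgX : gMet f X (fun r => a r • Z r) = fun r => a r * gMet f X Z r := by
    funext r; exact gVal_smul_right f r _ _ _
  unfold koszul
  rw [hgY, hgX, vderiv_mul (ha q) (differentiable_gMet hf hY hZ q),
    vderiv_mul (ha q) (differentiable_gMet hf hX hZ q), vderiv_smul_field]
  simp only [gMet, lie_smul_right (ha q) (hZ q), gVal_add_left, gVal_smul_left, gVal_smul_right,
    gVal_comm f q (Z q)]
  ring

end Koszul

def frame (f : Pt → ℝ) : Fin 3 → Pt → Pt := ![ξ1 f, ξ2, ξ3]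

def coframe (f : Pt → ℝ) : Fin 3 → Form1 := ![η1, η2, η3 f]

lemma differentiable_frame {f : Pt → ℝ} (hf : Differentiable ℝ f) (k : Fin 3) :
    Differentiable ℝ (frame f k) := by
  fin_cases k
  · show Differentiable ℝ fun q : Pt => ((2 : ℝ), 2 * q.2.2, 2 * f q)
    fun_prop
  all_goals exact differentiable_const _

lemma differentiable_ev1_coframe {f : Pt → ℝ} (hf : Differentiable ℝ f) {Z : Pt → Pt}
    (hZ : Differentiable ℝ Z) (k : Fin 3) : Differentiable ℝ (ev1 (coframe f k) Z) := by
  unfold ev1 dot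
  fin_cases k <;>
    simp only [coframe, η1, η2, η3, Fin.zero_eta, Fin.mk_one, Fin.reduceFinMk, Fin.isValue,
      Matrix.cons_val', Matrix.cons_val_zero, Matrix.cons_val_one, Matrix.cons_val,
      Matrix.cons_val_fin_one] <;>
    fun_prop

lemma gMet_frame (f : Pt → ℝ) (i j : Fin 3) :
    gMet f (frame f i) (frame f j) = fun _ => if i = j then 1 else 0 := by
  funext q
  fin_cases i <;> fin_cases j <;> simp [frame, gMet, gVal, dot, η1, η2, η3, ξ1, ξ2, ξ3]

lemma sum_ev1_coframe_smul_frame (f : Pt → ℝ) (Z : Pt → Pt) :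
    ∑ k, (fun q => ev1 (coframe f k) Z q • frame f k q) = Z := by
  ext q <;> simp [Fin.sum_univ_three, frame, coframe, ev1, dot, η1, η2, η3, ξ1, ξ2, ξ3] <;>
    ring

lemma fderiv_ξ1_apply {f : Pt → ℝ} {q : Pt} (hf : DifferentiableAt ℝ f q) (v : Pt) :
    fderiv ℝ (ξ1 f) q v = (0, 2 * v.2.2, 2 * fderiv ℝ f q v) := by
  have h : HasFDerivAt (ξ1 f) _ q := (hasFDerivAt_const (2 : ℝ) q).prodMk
      ((hasFDerivAt_snd.snd.const_mul 2).prodMk (hf.hasFDerivAt.const_mul 2))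
  simp [h.fderiv]

lemma fderiv_ξ2 (q : Pt) : fderiv ℝ ξ2 q = 0 := fderiv_const_apply _

lemma fderiv_ξ3 (q : Pt) : fderiv ℝ ξ3 q = 0 := fderiv_const_apply _

lemma lie_self_apply (X : Pt → Pt) (q : Pt) : lie X X q = 0 := by
  simp [lie]

lemma lie_swap_apply (X Y : Pt → Pt) (q : Pt) : lie X Y q = -lie Y X q := by
  simp [lie]

lemma lie_ξ1_ξ2 {f : Pt → ℝ} {q : Pt} (hf : DifferentiableAt ℝ f q) :
    lie (ξ1 f) ξ2 q = (-2 * pdy f q) • ξ3 q := by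
  have h : fderiv ℝ f q (0, 2, 0) = 2 * pdy f q := by
    rw [pdy, ← smul_eq_mul, ← map_smul]; simp
  simp [lie, fderiv_ξ2, fderiv_ξ1_apply hf, h, ξ2, ξ3]
  ring

lemma lie_ξ1_ξ3 {f : Pt → ℝ} {q : Pt} (hf : DifferentiableAt ℝ f q) :
    lie (ξ1 f) ξ3 q = (-2 : ℝ) • ξ2 q + (-2 * pdp f q) • ξ3 q := by
  have h : fderiv ℝ f q (0, 0, 2) = 2 * pdp f q := by
    rw [pdp, ← smul_eq_mul, ← map_smul]; simp
  simp [lie, fderiv_ξ3, fderiv_ξ1_apply hf, h, ξ2, ξ3]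
  ring

lemma lie_ξ2_ξ3 (q : Pt) : lie ξ2 ξ3 q = 0 := by
  simp [lie, fderiv_ξ2, fderiv_ξ3]

lemma koszul_frame (f : Pt → ℝ) (i j k : Fin 3) (q : Pt) :
    koszul f (frame f i) (frame f j) (frame f k) q =
      gMet f (lie (frame f i) (frame f j)) (frame f k) q
        - gMet f (lie (frame f i) (frame f k)) (frame f j) q
        - gMet f (lie (frame f j) (frame f k)) (frame f i) q := by
  simp only [koszul, gMet_frame, vderiv_const, Pi.zero_apply]
  ring

theorem isLC_of_frame {f : Pt → ℝ} {X Y W : Pt → Pt} (hf : Differentiable ℝ f)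
    (hX : Differentiable ℝ X) (hY : Differentiable ℝ Y)
    (hW : ∀ k q, 2 * gVal f q (W q) (frame f k q) = koszul f X Y (frame f k) q) :
    IsLC f X Y W := by
  intro Z hZ q
  have hcoef := differentiable_ev1_coframe hf (hZ.differentiable (by simp))
  have hterm k : Differentiable ℝ fun r => ev1 (coframe f k) Z r • frame f k r :=
    (hcoef k).smul (differentiable_frame hf k)
  rw [← sum_ev1_coframe_smul_frame f Z]
  simp only [Fin.sum_univ_three]
  rw [koszul_add_right hf hX hY ((hterm 0).add (hterm 1)) (hterm 2),
    koszul_add_right hf hX hY (hterm 0) (hterm 1)]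
  simp only [koszul_smul_right hf hX hY (hcoef _) (differentiable_frame hf _), Pi.add_apply,
    gVal_add_right, gVal_smul_right, ← hW]
  ring

theorem isLC_frame_of_lie {f : Pt → ℝ} (hf : Differentiable ℝ f) (i j : Fin 3) (W : Pt → Pt)
    (hW : ∀ k q, 2 * gVal f q (W q) (frame f k q) =
      gMet f (lie (frame f i) (frame f j)) (frame f k) q
        - gMet f (lie (frame f i) (frame f k)) (frame f j) q
        - gMet f (lie (frame f j) (frame f k)) (frame f i) q) :
    IsLC f (frame f i) (frame f j) W :=
  isLC_of_frame hf (differentiable_frame hf i) (differentiable_frame hf j) fun k q => by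
    rw [hW, koszul_frame]

/-- the action of the Levi-Civita connection of g on the orthonormal frame
(ξ₁, ξ₂, ξ₃). -/
theorem levi_civita_on_frame (f : Pt → ℝ) (hf : ContDiff ℝ (⊤ : ℕ∞) f) :
    IsLC f (ξ1 f) (ξ1 f) (fun _ => (0 : Pt)) ∧
    IsLC f (ξ1 f) ξ2 (fun q => (-(pdy f q - 1)) • ξ3 q) ∧
    IsLC f (ξ1 f) ξ3 (fun q => (pdy f q - 1) • ξ2 q) ∧
    IsLC f ξ2 (ξ1 f) (fun q => (pdy f q + 1) • ξ3 q) ∧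
    IsLC f ξ2 ξ2 (fun _ => (0 : Pt)) ∧
    IsLC f ξ2 ξ3 (fun q => (-(pdy f q + 1)) • ξ1 f q) ∧
    IsLC f ξ3 (ξ1 f) (fun q => (pdy f q + 1) • ξ2 q + (2 * pdp f q) • ξ3 q) ∧
    IsLC f ξ3 ξ2 (fun q => (-(pdy f q + 1)) • ξ1 f q) ∧
    IsLC f ξ3 ξ3 (fun q => (-(2 * pdp f q)) • ξ1 f q) := by
  have hf' : Differentiable ℝ f := hf.differentiable (by simp)
  have lc := isLC_frame_of_lie hf'
  refine ⟨lc 0 0 _ ?_, lc 0 1 _ ?_, lc 0 2 _ ?_, lc 1 0 _ ?_, lc 1 1 _ ?_, lc 1 2 _ ?_,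
    lc 2 0 _ ?_, lc 2 1 _ ?_, lc 2 2 _ ?_⟩ <;>
  intro k q <;> fin_cases k <;>
  simp [frame, lie_self_apply, lie_swap_apply ξ2 (ξ1 f), lie_swap_apply ξ3 (ξ1 f),
    lie_swap_apply ξ3 ξ2, lie_ξ1_ξ2 (hf' q), lie_ξ1_ξ3 (hf' q), lie_ξ2_ξ3, gMet, gVal, dot,
    η1, η2, η3, ξ1, ξ2, ξ3] <;> ring
end
end

section
/- The following are equivalent: (i) η³ ∧ dη³ = 0 everywhere on Σ (the bi-vector Ω = ξ₁∧ξ₂ defines a Poisson structure); (ii) the Lie derivative L_{ξ₂} g = 0, i.e. ξ₂ is Killing, so that the contact metric structure (φ, ξ₂, η², g) is Sasakian; (iii) f_y ≡ 0 on Σ. -/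
/-!
Concrete model of the geometry of a second order ODE  y'' = f(x, y, y')
on Σ = ℝ³ with coordinates (x, y, p):

* a vector field is given by its components w.r.t. (∂x, ∂y, ∂p);
* a 1-form by its components w.r.t. (dx, dy, dp);
* a 2-form by its components w.r.t. (dy∧dp, dp∧dx, dx∧dy);
* a 3-form by its coefficient w.r.t. dx∧dy∧dp.
-/

noncomputable section

/-!
Since `ξ₂ = 2∂_y` has constant coefficients, `[ξ₂, X] = 2∂_y X` and `L_{ξ₂} g` is the
`y`-derivative of the coefficients of `g`. Of `η¹, η², η³` only `η³ = (dp − f dx)/2` depends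
on `y`, so `(L_{ξ₂} g)(X, Y) = −f_y (X^x η³(Y) + Y^x η³(X))`, which is `−f_y/2` on
`(∂_x, ∂_p)`. Likewise `η³ ∧ dη³ = (f_y/4) dx∧dy∧dp`.
-/

open ContinuousLinearMap

def lieDerivMetric (f : Pt → ℝ) (Z X Y : VF) (q : Pt) : ℝ :=
  vderiv Z (gMet f X Y) q - gMet f (lie Z X) Y q - gMet f X (lie Z Y) q

lemma differentiableAt_dot {ω X : Pt → Pt} {q : Pt} (hω : DifferentiableAt ℝ ω q)
    (hX : DifferentiableAt ℝ X q) : DifferentiableAt ℝ (fun r => dot (ω r) (X r)) q := by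
  unfold dot; fun_prop

lemma fderiv_dot_apply {ω X : Pt → Pt} {q : Pt} (hω : DifferentiableAt ℝ ω q)
    (hX : DifferentiableAt ℝ X q) (v : Pt) :
    fderiv ℝ (fun r => dot (ω r) (X r)) q v
      = dot (fderiv ℝ ω q v) (X q) + dot (ω q) (fderiv ℝ X q v) := by
  have hω' := hω.hasFDerivAt
  have hX' := hX.hasFDerivAt
  have h : HasFDerivAt (fun r => dot (ω r) (X r)) _ q :=
    ((hω'.fst.mul hX'.fst).add (hω'.snd.fst.mul hX'.snd.fst)).add (hω'.snd.snd.mul hX'.snd.snd)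
  rw [h.fderiv]
  simp only [add_apply, smul_apply, comp_apply, coe_fst', coe_snd', smul_eq_mul, dot]
  ring

lemma differentiable_η1 : Differentiable ℝ η1 := by unfold η1; fun_prop

lemma differentiable_η2 : Differentiable ℝ η2 := by unfold η2; fun_prop

lemma differentiableAt_η3 {f : Pt → ℝ} {q : Pt} (hf : DifferentiableAt ℝ f q) :
    DifferentiableAt ℝ (η3 f) q := by unfold η3; fun_prop

lemma fderiv_η2_apply (q v : Pt) : fderiv ℝ η2 q v = (-v.2.2 / 2, 0, 0) := by
  have h : HasFDerivAt η2 _ q :=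
    ((hasFDerivAt_id (𝕜 := ℝ) q).snd.snd.neg.mul_const (2 : ℝ)⁻¹).prodMk
      ((hasFDerivAt_const ((1 : ℝ) / 2) q).prodMk (hasFDerivAt_const (0 : ℝ) q))
  rw [h.fderiv]
  simp [div_eq_mul_inv, mul_comm]

lemma fderiv_η3_apply {f : Pt → ℝ} {q : Pt} (hf : DifferentiableAt ℝ f q) (v : Pt) :
    fderiv ℝ (η3 f) q v = (-fderiv ℝ f q v / 2, 0, 0) := by
  have h : HasFDerivAt (η3 f) _ q :=
    (hf.hasFDerivAt.neg.mul_const (2 : ℝ)⁻¹).prodMk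
      ((hasFDerivAt_const (0 : ℝ) q).prodMk (hasFDerivAt_const ((1 : ℝ) / 2) q))
  rw [h.fderiv]
  simp [div_eq_mul_inv, mul_comm]

lemma fderiv_apply_ξ2 {E : Type*} [NormedAddCommGroup E] [NormedSpace ℝ E] (F : Pt → E)
    (q : Pt) : fderiv ℝ F q (ξ2 q) = (2 : ℝ) • fderiv ℝ F q (0, 1, 0) := by
  rw [← map_smul]
  congr 1
  ext <;> simp [ξ2]

lemma lie_ξ2 (X : VF) : lie ξ2 X = fun q => fderiv ℝ X q (ξ2 q) := by
  ext1 q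
  simp [lie, show fderiv ℝ ξ2 q = 0 from fderiv_const_apply _]

lemma η3_wedge_d1_η3 (f : Pt → ℝ) (q : Pt) : w12 (η3 f) (d1 (η3 f)) q = pdy f q / 4 := by
  have h : (fun r => -f r / 2) = (-(2 : ℝ)⁻¹) • f := by
    ext r; simp [div_eq_mul_inv, mul_comm]
  simp only [w12, d1, η3, dot, pdx, pdy, pdp, h, fderiv_const_smul_field, fderiv_fun_const,
    Pi.zero_apply, zero_apply, Pi.smul_apply, smul_apply, smul_eq_mul]
  ring

lemma lieDerivMetric_ξ2 {f : Pt → ℝ} {X Y : VF} {q : Pt} (hf : DifferentiableAt ℝ f q)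
    (hX : DifferentiableAt ℝ X q) (hY : DifferentiableAt ℝ Y q) :
    lieDerivMetric f ξ2 X Y q
      = -pdy f q * ((X q).1 * dot (η3 f q) (Y q) + (Y q).1 * dot (η3 f q) (X q)) := by
  have hη1 := differentiable_η1 q
  have hη2 := differentiable_η2 q
  have hη3 := differentiableAt_η3 hf
  have hη1' : fderiv ℝ η1 q = 0 := fderiv_const_apply _
  have hη2' : fderiv ℝ η2 q (ξ2 q) = 0 := by simp [fderiv_η2_apply, ξ2]
  have hη3' : fderiv ℝ (η3 f) q (ξ2 q) = (-pdy f q, 0, 0) := by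
    rw [fderiv_η3_apply hf, fderiv_apply_ξ2, pdy, smul_eq_mul]
    ring_nf
  have h1X := differentiableAt_dot hη1 hX
  have h1Y := differentiableAt_dot hη1 hY
  have h2X := differentiableAt_dot hη2 hX
  have h2Y := differentiableAt_dot hη2 hY
  have h3X := differentiableAt_dot hη3 hX
  have h3Y := differentiableAt_dot hη3 hY
  have hg : gMet f X Y = fun r => dot (η1 r) (X r) * dot (η1 r) (Y r)
      + dot (η2 r) (X r) * dot (η2 r) (Y r) + dot (η3 f r) (X r) * dot (η3 f r) (Y r) := rfl
  unfold lieDerivMetric vderiv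
  rw [lie_ξ2, lie_ξ2, hg,
    fderiv_fun_add ((h1X.fun_mul h1Y).fun_add (h2X.fun_mul h2Y)) (h3X.fun_mul h3Y),
    fderiv_fun_add (h1X.fun_mul h1Y) (h2X.fun_mul h2Y),
    fderiv_fun_mul h1X h1Y, fderiv_fun_mul h2X h2Y, fderiv_fun_mul h3X h3Y]
  simp only [add_apply, smul_apply, smul_eq_mul, fderiv_dot_apply hη1 hX, fderiv_dot_apply hη1 hY,
    fderiv_dot_apply hη2 hX, fderiv_dot_apply hη2 hY, fderiv_dot_apply hη3 hX,
    fderiv_dot_apply hη3 hY, hη1', hη2', hη3', zero_apply]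
  simp only [gMet, gVal, dot, Prod.fst_zero, Prod.snd_zero]
  ring

/-- the following are equivalent: (i) η³ ∧ dη³ = 0 on Σ (the bi-vector
Ω = ξ₁∧ξ₂ is a Poisson structure); (ii) L_{ξ₂} g = 0, i.e. ξ₂ is Killing, so the contact
metric structure (φ, ξ₂, η², g) is Sasakian; (iii) f_y ≡ 0 on Σ. -/
theorem poisson_iff_sasakian (f : Pt → ℝ) (hf : ContDiff ℝ (⊤ : ℕ∞) f) :
    ((∀ q, w12 (η3 f) (d1 (η3 f)) q = 0) ↔ (∀ q, pdy f q = 0)) ∧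
    ((∀ X Y : VF, SmoothVF X → SmoothVF Y → ∀ q,
        vderiv ξ2 (gMet f X Y) q - gMet f (lie ξ2 X) Y q - gMet f X (lie ξ2 Y) q = 0)
      ↔ (∀ q, pdy f q = 0)) := by
  have hfd : Differentiable ℝ f := hf.differentiable (by simp)
  refine ⟨forall_congr' fun q => by rw [η3_wedge_d1_η3]; constructor <;> intro h <;> linarith, ?_⟩
  change (∀ X Y : VF, SmoothVF X → SmoothVF Y → ∀ q, lieDerivMetric f ξ2 X Y q = 0) ↔ _
  constructor
  · intro hKilling q
    have h := hKilling (fun _ => (1, 0, 0)) (fun _ => (0, 0, 1)) contDiff_const contDiff_const q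
    rw [lieDerivMetric_ξ2 (hfd q) (differentiableAt_const _) (differentiableAt_const _)] at h
    simpa [η3, dot] using h
  · intro hfy X Y hX hY q
    rw [lieDerivMetric_ξ2 (hfd q) (hX.differentiable (by simp) q) (hY.differentiable (by simp) q),
      hfy q, neg_zero, zero_mul]
end
end

section
/- For any smooth function H : Σ → ℝ, set λ = ξ₁(H) = 2(H_x + pH_y + fH_p), μ = ξ₂(H) = 2H_y, and η = λ η¹ + μ η². Then η = dH − ξ₃(H) η³, and η ∧ dη = ( μ ξ₃(λ) − λ ξ₃(μ) − 2μ² ) vol_g. -/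
/-!
Concrete model of the geometry of a second order ODE  y'' = f(x, y, y')
on Σ = ℝ³ with coordinates (x, y, p):

* a vector field is given by its components w.r.t. (∂x, ∂y, ∂p);
* a 1-form by its components w.r.t. (dx, dy, dp);
* a 2-form by its components w.r.t. (dy∧dp, dp∧dx, dx∧dy);
* a 3-form by its coefficient w.r.t. dx∧dy∧dp.
-/

noncomputable section

/-!
Because (ξ₁, ξ₂, ξ₃) is the frame dual to (η¹, η², η³), every differential expands as
dF = ξ₁(F) η¹ + ξ₂(F) η² + ξ₃(F) η³, which gives the first identity. In coordinates
η = A dx + B dy with A = (λ − pμ)/2 and B = μ/2, so η ∧ dη = (B ∂ₚA − A ∂ₚB) dx∧dy∧dp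
= (μ ∂ₚλ − λ ∂ₚμ − μ²)/4 dx∧dy∧dp; since vol_g = (1/8) dx∧dy∧dp and ξ₃ = 2∂ₚ, this is the
stated multiple of vol_g.
-/

lemma fderiv_apply_mk (F : Pt → ℝ) (q : Pt) (a b c : ℝ) :
    fderiv ℝ F q (a, b, c) = a * pdx F q + b * pdy F q + c * pdp F q := by
  have h : ((a, b, c) : Pt) = a • ((1 : ℝ), (0 : ℝ), (0 : ℝ)) + b • ((0 : ℝ), (1 : ℝ), (0 : ℝ))
      + c • ((0 : ℝ), (0 : ℝ), (1 : ℝ)) := by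
    simp
  rw [h, map_add, map_add, map_smul, map_smul, map_smul]
  simp [pdx, pdy, pdp]

lemma vderiv_ξ1 (f F : Pt → ℝ) (q : Pt) :
    vderiv (ξ1 f) F q = 2 * (pdx F q + q.2.2 * pdy F q + f q * pdp F q) := by
  simp only [vderiv, ξ1, fderiv_apply_mk]; ring

lemma vderiv_ξ2 (F : Pt → ℝ) (q : Pt) : vderiv ξ2 F q = 2 * pdy F q := by
  simp only [vderiv, ξ2, fderiv_apply_mk]; ring

lemma vderiv_ξ3 (F : Pt → ℝ) (q : Pt) : vderiv ξ3 F q = 2 * pdp F q := by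
  simp only [vderiv, ξ3, fderiv_apply_mk]; ring

lemma dFun_eq_vderiv_smul_η (f F : Pt → ℝ) (q : Pt) :
    dFun F q = vderiv (ξ1 f) F q • η1 q + vderiv ξ2 F q • η2 q + vderiv ξ3 F q • η3 f q := by
  simp only [vderiv_ξ1, vderiv_ξ2, vderiv_ξ3, dFun, η1, η2, η3, Prod.smul_mk, smul_eq_mul,
    Prod.mk_add_mk, Prod.mk.injEq]
  refine ⟨by ring, by ring, by ring⟩

lemma volg_apply (f : Pt → ℝ) (q : Pt) : volg f q = 1 / 8 := by
  simp only [volg, w11, w12, dot, cross, η1, η2, η3]; ring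

lemma contDiff_ξ1 {n : WithTop ℕ∞} {f : Pt → ℝ} (hf : ContDiff ℝ n f) : ContDiff ℝ n (ξ1 f) :=
  contDiff_const.prodMk ((contDiff_const.mul (contDiff_snd.comp contDiff_snd)).prodMk
    (contDiff_const.mul hf))

lemma ContDiff.vderiv {n : WithTop ℕ∞} {X : VF} {F : Pt → ℝ} (hF : ContDiff ℝ (n + 1) F)
    (hX : ContDiff ℝ n X) : ContDiff ℝ n (vderiv X F) :=
  (hF.fderiv_right le_rfl).clm_apply hX

lemma HasFDerivAt.pdp_eq {F : Pt → ℝ} {F' : Pt →L[ℝ] ℝ} {q : Pt} (h : HasFDerivAt F F' q) :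
    pdp F q = F' (0, 0, 1) := by
  rw [pdp, h.fderiv]

lemma w12_d1_of_snd_snd_eq_zero (ω : Form1) (h : ∀ r, (ω r).2.2 = 0) (q : Pt) :
    w12 ω (d1 ω) q
      = (ω q).2.1 * pdp (fun r => (ω r).1) q - (ω q).1 * pdp (fun r => (ω r).2.1) q := by
  have h0 : (fun r => (ω r).2.2) = fun _ => 0 := funext h
  simp only [w12, d1, dot, h0, h q, pdx, pdy, fderiv_const_apply, zero_apply]
  ring

lemma w12_d1_smul_η1_add_smul_η2 {L M : Pt → ℝ} {q : Pt} (hL : DifferentiableAt ℝ L q)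
    (hM : DifferentiableAt ℝ M q) :
    w12 (fun r => L r • η1 r + M r • η2 r) (d1 (fun r => L r • η1 r + M r • η2 r)) q
      = (M q * pdp L q - L q * pdp M q - M q ^ 2) / 4 := by
  have hp : HasFDerivAt (fun r : Pt => r.2.2)
      ((ContinuousLinearMap.snd ℝ ℝ ℝ).comp (ContinuousLinearMap.snd ℝ ℝ (ℝ × ℝ))) q :=
    hasFDerivAt_snd.comp q hasFDerivAt_snd
  have hx : (fun r => (L r • η1 r + M r • η2 r).1) = fun r => (L r - r.2.2 * M r) * 2⁻¹ := by
    funext r; simp only [η1, η2, Prod.smul_mk, smul_eq_mul, Prod.mk_add_mk]; ring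
  have hy : (fun r => (L r • η1 r + M r • η2 r).2.1) = fun r => M r * 2⁻¹ := by
    funext r; simp [η1, η2]
  have hdx : pdp (fun r => (L r • η1 r + M r • η2 r).1) q
      = (pdp L q - M q - q.2.2 * pdp M q) / 2 := by
    rw [hx, ((hL.hasFDerivAt.fun_sub (hp.fun_mul hM.hasFDerivAt)).mul_const 2⁻¹).pdp_eq]
    simp only [smul_apply, sub_apply, add_apply, smul_eq_mul, ContinuousLinearMap.comp_apply,
      ContinuousLinearMap.coe_snd', pdp]
    ring
  have hdy : pdp (fun r => (L r • η1 r + M r • η2 r).2.1) q = pdp M q / 2 := by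
    rw [hy, (hM.hasFDerivAt.mul_const 2⁻¹).pdp_eq]
    simp only [smul_apply, smul_eq_mul, pdp]
    ring
  rw [w12_d1_of_snd_snd_eq_zero _ (fun r => by simp [η1, η2]), hdx, hdy]
  simp only [η1, η2, Prod.smul_mk, smul_eq_mul, Prod.mk_add_mk]
  ring

/-- with λ = ξ₁(H) = 2(H_x + pH_y + fH_p), μ = ξ₂(H) = 2H_y and
η = λη¹ + μη², one has η = dH − ξ₃(H) η³ and
η ∧ dη = ( μ ξ₃(λ) − λ ξ₃(μ) − 2μ² ) vol_g. -/
theorem eta_jacobi_expression (f : Pt → ℝ) (hf : ContDiff ℝ (⊤ : ℕ∞) f)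
    (H : Pt → ℝ) (hH : ContDiff ℝ (⊤ : ℕ∞) H) :
    (∀ q, vderiv (ξ1 f) H q = 2 * (pdx H q + q.2.2 * pdy H q + f q * pdp H q)) ∧
    (∀ q, vderiv ξ2 H q = 2 * pdy H q) ∧
    (∀ q, vderiv (ξ1 f) H q • η1 q + vderiv ξ2 H q • η2 q
        = dFun H q - vderiv ξ3 H q • η3 f q) ∧
    (∀ q, w12 (fun r => vderiv (ξ1 f) H r • η1 r + vderiv ξ2 H r • η2 r)
            (d1 (fun r => vderiv (ξ1 f) H r • η1 r + vderiv ξ2 H r • η2 r)) q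
        = (vderiv ξ2 H q * vderiv ξ3 (vderiv (ξ1 f) H) q
            - vderiv (ξ1 f) H q * vderiv ξ3 (vderiv ξ2 H) q
            - 2 * (vderiv ξ2 H q) ^ 2) * volg f q) := by
  have hH2 : ContDiff ℝ (1 + 1) H := hH.of_le (WithTop.coe_le_coe.mpr le_top)
  have hL : Differentiable ℝ (vderiv (ξ1 f) H) :=
    (hH2.vderiv (contDiff_ξ1 (hf.of_le (by simp)))).differentiable one_ne_zero
  have hM : Differentiable ℝ (vderiv ξ2 H) :=
    (hH2.vderiv contDiff_const).differentiable one_ne_zero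
  refine ⟨vderiv_ξ1 f H, vderiv_ξ2 H, fun q => ?_, fun q => ?_⟩
  · rw [dFun_eq_vderiv_smul_η f, add_sub_cancel_right]
  · rw [w12_d1_smul_η1_add_smul_η2 (hL q) (hM q), volg_apply, vderiv_ξ3, vderiv_ξ3]
    ring
end
end

section
/- Assume f_y ≡ 0 (the ODE is y'' = f(x, y')). Then the Hamiltonian vector field v = 2(f_x + f f_p) ξ₂ (the field obtained by taking the right-hand side f as Hamiltonian function) satisfies ∇_v v = 0, where ∇ is the Levi-Civita connection of g; equivalently, for every smooth vector field Z on Σ, 2 v(g(v,Z)) − Z(g(v,v)) − 2 g([v,Z], v) = 0. Hence the integral curves of v are geodesics of g. -/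
/-!
Concrete model of the geometry of a second order ODE  y'' = f(x, y, y')
on Σ = ℝ³ with coordinates (x, y, p):

* a vector field is given by its components w.r.t. (∂x, ∂y, ∂p);
* a 1-form by its components w.r.t. (dx, dy, dp);
* a 2-form by its components w.r.t. (dy∧dp, dp∧dx, dx∧dy);
* a 3-form by its coefficient w.r.t. dx∧dy∧dp.
-/

noncomputable section

/-!
Write v = h • ξ₂ with h = 2(f_x + f f_p). Since η¹(ξ₂) = η³(ξ₂) = 0 and η²(ξ₂) = 1, one has
g(v, Z) = h η²(Z) and g(v, v) = h², and the Koszul expression 2 g(∇_v v, Z) becomes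
2h² ξ₂(η²(Z)) − 2h Z(h) − 2h (h η²(DZ·ξ₂) − Z(h)) as soon as ξ₂(h) = 0, where DZ is the
componentwise derivative of Z. As η² does not depend on y, ξ₂(η²(Z)) = η²(DZ·ξ₂), so this
vanishes. Finally ξ₂(h) = 0 because f_y ≡ 0 and second partial derivatives commute.
-/

open ContinuousLinearMap

section SecondDerivatives

variable {F : Pt → ℝ}

lemma fderiv_fderiv_apply_comm (hF : ContDiff ℝ 2 F) (q u w : Pt) :
    fderiv ℝ (fun r => fderiv ℝ F r w) q u = fderiv ℝ (fun r => fderiv ℝ F r u) q w := by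
  have hdiff : Differentiable ℝ (fderiv ℝ F) :=
    (hF.fderiv_right (m := 1) (by norm_num)).differentiable one_ne_zero
  rw [fderiv_clm_apply (hdiff q) (differentiableAt_const w),
    fderiv_clm_apply (hdiff q) (differentiableAt_const u)]
  simpa using (hF.contDiffAt.isSymmSndFDerivAt
    (by simp [minSmoothness_of_isRCLikeNormedField])) u w

lemma differentiable_fderiv_apply (hF : ContDiff ℝ 2 F) (w : Pt) :
    Differentiable ℝ (fun r => fderiv ℝ F r w) :=
  ((hF.fderiv_right (m := 1) (by norm_num)).clm_apply contDiff_const).differentiable one_ne_zero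

lemma pdy_fderiv_apply_eq_zero (hF : ContDiff ℝ 2 F) (hy : ∀ q, pdy F q = 0) (w q : Pt) :
    pdy (fun r => fderiv ℝ F r w) q = 0 := by
  have hconst : (fun r => fderiv ℝ F r (0, 1, 0)) = fun _ => 0 := funext hy
  rw [pdy, fderiv_fderiv_apply_comm hF, hconst, fderiv_fun_const, Pi.zero_apply, zero_apply]

lemma differentiable_hamiltonian_coeff (hF : ContDiff ℝ 2 F) :
    Differentiable ℝ (fun r => 2 * (pdx F r + F r * pdp F r)) := by
  have hx := differentiable_fderiv_apply hF (1, 0, 0)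
  have hp := differentiable_fderiv_apply hF (0, 0, 1)
  exact (hx.fun_add ((hF.differentiable two_ne_zero).fun_mul hp)).const_mul 2

lemma pdy_hamiltonian_coeff (hF : ContDiff ℝ 2 F) (hy : ∀ q, pdy F q = 0) (q : Pt) :
    pdy (fun r => 2 * (pdx F r + F r * pdp F r)) q = 0 := by
  have hx := differentiable_fderiv_apply hF (1, 0, 0) q
  have hp := differentiable_fderiv_apply hF (0, 0, 1) q
  have hF' := hF.differentiable two_ne_zero q
  have hxy := pdy_fderiv_apply_eq_zero hF hy (1, 0, 0) q
  have hpy := pdy_fderiv_apply_eq_zero hF hy (0, 0, 1) q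
  simp only [pdy, pdx, pdp] at hxy hpy hy ⊢
  rw [((hx.hasFDerivAt.fun_add (hF'.hasFDerivAt.fun_mul hp.hasFDerivAt)).const_mul 2).fderiv]
  simp [hxy, hpy, hy]

end SecondDerivatives

section Metric

variable (f : Pt → ℝ)

lemma gMet_comm (X Y : VF) : gMet f X Y = gMet f Y X := by
  funext q
  simp only [gMet, gVal]
  ring

lemma koszul_self (X Z : VF) (q : Pt) :
    koszul f X X Z q =
      2 * vderiv X (gMet f X Z) q - vderiv Z (gMet f X X) q - 2 * gMet f (lie X Z) X q := by
  have hlie : gMet f (lie X X) Z q = 0 := by simp [gMet, gVal, lie, dot]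
  simp only [koszul, hlie]
  ring

lemma nabla_eq_zero_of_koszul_eq_zero {X Y : VF} {q : Pt}
    (h₁ : koszul f X Y (ξ1 f) q = 0) (h₂ : koszul f X Y ξ2 q = 0)
    (h₃ : koszul f X Y ξ3 q = 0) : nabla f X Y q = 0 := by
  simp [nabla, h₁, h₂, h₃]

lemma gMet_smul_ξ2 (h : Pt → ℝ) (W : VF) :
    gMet f (fun r => h r • ξ2 r) W = fun r => h r * ev1 η2 W r := by
  funext r
  simp only [gMet, gVal, ev1, dot, η1, η2, η3, ξ2, Prod.smul_mk, smul_eq_mul]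
  ring

variable {f}

lemma differentiable_ξ1 (hf : Differentiable ℝ f) : Differentiable ℝ (ξ1 f) :=
  (differentiable_const _).prodMk
    ((differentiable_snd.snd.const_mul 2).prodMk (hf.const_mul 2))

end Metric

section SmulXi2

variable {h : Pt → ℝ} {Z : VF} {q : Pt}

lemma ev1_η2_smul_ξ2 (h : Pt → ℝ) : ev1 η2 (fun r => h r • ξ2 r) = h := by
  funext r
  simp only [ev1, dot, η2, ξ2, Prod.smul_mk, smul_eq_mul]
  ring

lemma ev1_η2_eq (W : VF) :
    ev1 η2 W = fun r => -1 / 2 * r.2.2 * (W r).1 + 1 / 2 * (W r).2.1 := by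
  funext r
  simp only [ev1, dot, η2]
  ring

lemma differentiableAt_ev1_η2 (hZ : DifferentiableAt ℝ Z q) :
    DifferentiableAt ℝ (ev1 η2 Z) q := by
  rw [ev1_η2_eq]
  exact ((differentiableAt_snd.snd.const_mul _).fun_mul hZ.fst).fun_add (hZ.snd.fst.const_mul _)

-- η² only depends on p, so differentiating η²(Z) along ξ₂ only differentiates Z.
lemma vderiv_ξ2_ev1_η2 (hZ : DifferentiableAt ℝ Z q) :
    vderiv ξ2 (ev1 η2 Z) q = ev1 η2 (fun r => fderiv ℝ Z r (ξ2 r)) q := by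
  have hZ' := hZ.hasFDerivAt
  have hG := ((hasFDerivAt_snd.snd.const_mul (-1 / 2 : ℝ)).fun_mul hZ'.fst).fun_add
    (hZ'.snd.fst.const_mul (1 / 2 : ℝ))
  rw [vderiv, ev1_η2_eq, hG.fderiv]
  simp only [add_apply, smul_apply, comp_apply, coe_fst', coe_snd', smul_eq_mul, ev1, dot, η2, ξ2]
  ring

lemma ev1_η2_lie_smul_ξ2 (hh : DifferentiableAt ℝ h q) :
    ev1 η2 (lie (fun r => h r • ξ2 r) Z) q =
      h q * ev1 η2 (fun r => fderiv ℝ Z r (ξ2 r)) q - vderiv Z h q := by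
  have hV : HasFDerivAt (fun r => h r • ξ2 r) ((fderiv ℝ h q).smulRight (0, 2, 0)) q :=
    hh.hasFDerivAt.smul_const _
  simp only [ev1, lie, hV.fderiv, map_smul]
  simp only [dot, η2, ξ2, smulRight_apply, Prod.smul_mk, Prod.smul_fst, Prod.smul_snd,
    smul_eq_mul, Prod.fst_sub, Prod.snd_sub, vderiv]
  ring

lemma vderiv_smul_ξ2_mul (hh : DifferentiableAt ℝ h q) (hhy : pdy h q = 0) {G : Pt → ℝ}
    (hG : DifferentiableAt ℝ G q) :
    vderiv (fun r => h r • ξ2 r) (fun r => h r * G r) q = h q ^ 2 * vderiv ξ2 G q := by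
  have hξ2 : ξ2 q = (2 : ℝ) • ((0, 1, 0) : Pt) := by simp [ξ2]
  rw [pdy] at hhy
  simp only [vderiv, fderiv_fun_mul hh hG, hξ2, map_smul, add_apply, smul_apply, smul_eq_mul,
    hhy, mul_zero, add_zero]
  ring

lemma vderiv_mul_self (hh : DifferentiableAt ℝ h q) :
    vderiv Z (fun r => h r * h r) q = 2 * h q * vderiv Z h q := by
  simp only [vderiv, fderiv_fun_mul hh hh, add_apply, smul_apply, smul_eq_mul]
  ring

theorem koszul_smul_ξ2_self_eq_zero (f : Pt → ℝ) (hh : DifferentiableAt ℝ h q)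
    (hhy : pdy h q = 0) (hZ : DifferentiableAt ℝ Z q) :
    koszul f (fun r => h r • ξ2 r) (fun r => h r • ξ2 r) Z q = 0 := by
  rw [koszul_self, gMet_smul_ξ2, gMet_smul_ξ2, ev1_η2_smul_ξ2, gMet_comm, gMet_smul_ξ2,
    vderiv_smul_ξ2_mul hh hhy (differentiableAt_ev1_η2 hZ), vderiv_ξ2_ev1_η2 hZ,
    vderiv_mul_self hh]
  beta_reduce
  rw [ev1_η2_lie_smul_ξ2 hh]
  ring

end SmulXi2

/-- for f_y ≡ 0, the Hamiltonian vector field v = 2(f_x + f f_p) ξ₂,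
obtained by taking H = f, satisfies ∇_v v = 0 (∇ the Levi-Civita connection of g);
equivalently 2 v(g(v,Z)) − Z(g(v,v)) − 2 g([v,Z], v) = 0 for every smooth vector
field Z.  Hence the integral curves of v are geodesics of g. -/
theorem hamiltonian_integral_curves_are_geodesics (f : Pt → ℝ)
    (hf : ContDiff ℝ (⊤ : ℕ∞) f) (hy : ∀ q, pdy f q = 0) :
    (∀ q, nabla f (fun r => (2 * (pdx f r + f r * pdp f r)) • ξ2 r)
        (fun r => (2 * (pdx f r + f r * pdp f r)) • ξ2 r) q = 0) ∧
    (∀ Z : VF, SmoothVF Z → ∀ q,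
      2 * vderiv (fun r => (2 * (pdx f r + f r * pdp f r)) • ξ2 r)
            (gMet f (fun r => (2 * (pdx f r + f r * pdp f r)) • ξ2 r) Z) q
        - vderiv Z (gMet f (fun r => (2 * (pdx f r + f r * pdp f r)) • ξ2 r)
            (fun r => (2 * (pdx f r + f r * pdp f r)) • ξ2 r)) q
        - 2 * gMet f (lie (fun r => (2 * (pdx f r + f r * pdp f r)) • ξ2 r) Z)
            (fun r => (2 * (pdx f r + f r * pdp f r)) • ξ2 r) q = 0) := by
  have hf2 : ContDiff ℝ 2 f := hf.of_le (WithTop.coe_le_coe.mpr le_top)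
  have hh := differentiable_hamiltonian_coeff hf2
  have hhy := pdy_hamiltonian_coeff hf2 hy
  refine ⟨fun q => nabla_eq_zero_of_koszul_eq_zero f ?_ ?_ ?_, fun Z hZ q => ?_⟩
  · exact koszul_smul_ξ2_self_eq_zero f (hh q) (hhy q)
      (differentiable_ξ1 (hf2.differentiable two_ne_zero) q)
  · exact koszul_smul_ξ2_self_eq_zero f (hh q) (hhy q) (differentiableAt_const _)
  · exact koszul_smul_ξ2_self_eq_zero f (hh q) (hhy q) (differentiableAt_const _)
  · rw [← koszul_self]
    exact koszul_smul_ξ2_self_eq_zero f (hh q) (hhy q) (hZ.differentiable (by simp) q)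
end
end

section
/- Assume f_y ≡ 0, and let H : Σ → ℝ be smooth with H_y ≡ 0 (H = H(x,p)) and ξ₁(H) = 2(H_x + f H_p) nowhere zero. Set H₁ = −p/2. Then the vector field v = ξ₁(H) ξ₂ admits a compatible bi-Hamiltonian structure: (i) v = ξ₃ × ∇H, where ∇H is the g-gradient of H and × is the cross product of g with volume form vol_g; (ii) v = (ξ₁(H) ξ₁) × ∇H₁, with ∇H₁ = −f ξ₁ − ξ₃; (iii) the corresponding Poisson 1-forms η³ and η = ξ₁(H) η¹ satisfy η³ ∧ dη³ = 0, η ∧ dη = 0, and the compatibility condition (η³ + η) ∧ d(η³ + η) = 0. -/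
/-!
Concrete model of the geometry of a second order ODE  y'' = f(x, y, y')
on Σ = ℝ³ with coordinates (x, y, p):

* a vector field is given by its components w.r.t. (∂x, ∂y, ∂p);
* a 1-form by its components w.r.t. (dx, dy, dp);
* a 2-form by its components w.r.t. (dy∧dp, dp∧dx, dx∧dy);
* a 3-form by its coefficient w.r.t. dx∧dy∧dp.
-/

noncomputable section

/-!
Parts (i) and (ii) are pointwise linear algebra: (ξ₁, ξ₂, ξ₃) is a positively oriented
g-orthonormal frame, so ×_g acts on frame coefficients as the Euclidean cross product, and
ξ₂(H) = 2 H_y = 0. For (iii), each of the three Poisson forms is ω = a dx + b dp with b constant,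
so ω ∧ dω = −b a_y dx∧dy∧dp. The coefficient a is built from f, H and the first derivatives of H,
all invariant under translations in y, hence a_y = 0.
-/

def YInvariant (F : Pt → ℝ) : Prop := ∀ (c : ℝ) (q : Pt), F (q + (0, c, 0)) = F q

namespace YInvariant

variable {F : Pt → ℝ}

lemma pdy_eq_zero (hF : YInvariant F) (q : Pt) : pdy F q = 0 := by
  by_cases hd : DifferentiableAt ℝ F q
  · have hline : (fun t : ℝ => F (q + t • ((0 : ℝ), (1 : ℝ), (0 : ℝ)))) = fun _ => F q := by
      funext t; simpa using hF t q
    rw [pdy, ← hd.lineDeriv_eq_fderiv, lineDeriv, hline, deriv_const]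
  · simp [pdy, fderiv_zero_of_not_differentiableAt hd]

lemma of_pdy_eq_zero (hF : Differentiable ℝ F) (h : ∀ q, pdy F q = 0) : YInvariant F := by
  intro c q
  have hline (t : ℝ) : HasDerivAt (fun s : ℝ => F (q + s • ((0 : ℝ), (1 : ℝ), (0 : ℝ))))
      (pdy F (q + t • ((0 : ℝ), (1 : ℝ), (0 : ℝ)))) t := by
    have := (hF _).hasFDerivAt.comp_hasDerivAt t
      (((hasDerivAt_id t).smul_const ((0 : ℝ), (1 : ℝ), (0 : ℝ))).const_add q)
    simp only [id, one_smul] at this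
    exact this
  simpa using is_const_of_deriv_eq_zero (fun t => (hline t).differentiableAt)
    (fun t => by rw [(hline t).deriv, h]) c 0

lemma fderiv_add_eq (hF : YInvariant F) (c : ℝ) (q : Pt) :
    fderiv ℝ F (q + (0, c, 0)) = fderiv ℝ F q := by
  rw [← fderiv_comp_add_right]
  congr 1
  funext r
  exact hF c r

lemma vderiv_ξ1 {f H : Pt → ℝ} (hf : YInvariant f) (hH : YInvariant H) :
    YInvariant (vderiv (ξ1 f) H) := by
  intro c q
  simp only [vderiv, ξ1, hH.fderiv_add_eq, hf c q, Prod.snd_add, add_zero]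

end YInvariant

lemma w12_self_d1_eq_zero {ω : Form1} {b : ℝ} (hω : ∀ r, (ω r).2 = (0, b))
    (ha : YInvariant fun r => (ω r).1) (q : Pt) : w12 ω (d1 ω) q = 0 := by
  have h₂ : (fun r => (ω r).2.1) = fun _ => 0 := funext fun r => congrArg Prod.fst (hω r)
  have h₃ : (fun r => (ω r).2.2) = fun _ => b := funext fun r => congrArg Prod.snd (hω r)
  have hq := hω q
  simp only [w12, d1, dot, h₂, h₃, ha.pdy_eq_zero, hq]
  simp [pdy, pdx, pdp]

lemma crossg_eq {f : Pt → ℝ} {X Y : VF} {q : Pt} {a₁ a₂ a₃ b₁ b₂ b₃ : ℝ}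
    (hX : X q = a₁ • ξ1 f q + a₂ • ξ2 q + a₃ • ξ3 q)
    (hY : Y q = b₁ • ξ1 f q + b₂ • ξ2 q + b₃ • ξ3 q) :
    crossg f X Y q = (a₂ * b₃ - a₃ * b₂) • ξ1 f q + (a₃ * b₁ - a₁ * b₃) • ξ2 q
      + (a₁ * b₂ - a₂ * b₁) • ξ3 q := by
  simp only [crossg, hX, hY, volg, w12, w11, dot, cross, η1, η2, η3, ξ1, ξ2, ξ3,
    Prod.smul_mk, Prod.mk_add_mk, smul_eq_mul, Prod.mk.injEq]
  refine ⟨by ring, by ring, by ring⟩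

lemma fderiv_neg_half_p (q v : Pt) :
    fderiv ℝ (fun r : Pt => -r.2.2 / 2) q v = -v.2.2 / 2 := by
  have h : (fun r : Pt => -r.2.2 / 2) = fun r => r.2.2 * (-(1 / 2) : ℝ) := by
    funext r; ring
  rw [h, ((hasFDerivAt_snd (p := q)).snd.mul_const (-(1 / 2) : ℝ)).fderiv]
  simp only [one_div, neg_smul, neg_apply, smul_apply, ContinuousLinearMap.comp_apply,
    ContinuousLinearMap.coe_snd', smul_eq_mul]
  ring

lemma grad_neg_half_p (f : Pt → ℝ) (q : Pt) :
    grad f (fun r => -r.2.2 / 2) q = (-(f q)) • ξ1 f q - ξ3 q := by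
  simp only [grad, vderiv, fderiv_neg_half_p, ξ1, ξ2, ξ3, Prod.smul_mk, Prod.mk_add_mk,
    Prod.mk_sub_mk, smul_eq_mul, Prod.mk.injEq]
  refine ⟨by ring, by ring, by ring⟩

theorem bi_hamiltonian_structure_general (f : Pt → ℝ) (hf : ContDiff ℝ (⊤ : ℕ∞) f)
    (hy : ∀ q, pdy f q = 0) (H : Pt → ℝ) (hH : ContDiff ℝ (⊤ : ℕ∞) H)
    (hHy : ∀ q, pdy H q = 0) :
    (∀ q, vderiv (ξ1 f) H q • ξ2 q = crossg f ξ3 (grad f H) q) ∧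
    ((∀ q, grad f (fun r => -r.2.2 / 2) q = (-(f q)) • ξ1 f q - ξ3 q) ∧
      (∀ q, vderiv (ξ1 f) H q • ξ2 q
        = crossg f (fun r => vderiv (ξ1 f) H r • ξ1 f r)
            (grad f (fun r => -r.2.2 / 2)) q)) ∧
    ((∀ q, w12 (η3 f) (d1 (η3 f)) q = 0) ∧
      (∀ q, w12 (fun r => vderiv (ξ1 f) H r • η1 r)
              (d1 (fun r => vderiv (ξ1 f) H r • η1 r)) q = 0) ∧
      (∀ q, w12 (fun r => η3 f r + vderiv (ξ1 f) H r • η1 r)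
              (d1 (fun r => η3 f r + vderiv (ξ1 f) H r • η1 r)) q = 0)) := by
  have hfY : YInvariant f := .of_pdy_eq_zero (hf.differentiable (by simp)) hy
  have hHY : YInvariant H := .of_pdy_eq_zero (hH.differentiable (by simp)) hHy
  have hξ₁H : YInvariant (vderiv (ξ1 f) H) := hfY.vderiv_ξ1 hHY
  refine ⟨fun q => ?_, ⟨grad_neg_half_p f, fun q => ?_⟩, fun q => ?_, fun q => ?_, fun q => ?_⟩
  · rw [crossg_eq (a₁ := 0) (a₂ := 0) (a₃ := 1) (by simp [ξ1, ξ2, ξ3]) rfl, vderiv_ξ2, hHy]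
    simp
  · rw [crossg_eq (a₁ := vderiv (ξ1 f) H q) (a₂ := 0) (a₃ := 0) (by simp) rfl]
    simp [vderiv, fderiv_neg_half_p, ξ2, ξ3]
  · exact w12_self_d1_eq_zero (b := 1 / 2) (fun r => rfl)
      (fun c r => by simp [η3, hfY c r]) q
  · exact w12_self_d1_eq_zero (b := 0) (fun r => by simp [η1])
      (fun c r => by simp [η1, hξ₁H c r]) q
  · exact w12_self_d1_eq_zero (b := 1 / 2) (fun r => by simp [η1, η3])
      (fun c r => by simp [η1, η3, hfY c r, hξ₁H c r]) q

/-- for f_y ≡ 0 and H = H(x,p) with ξ₁(H) nowhere zero, the vector field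
v = ξ₁(H) ξ₂ admits a compatible bi-Hamiltonian structure:
(i) v = ξ₃ ×_g ∇H;
(ii) v = (ξ₁(H) ξ₁) ×_g ∇H₁ with H₁ = −p/2 and ∇H₁ = −f ξ₁ − ξ₃;
(iii) the Poisson 1-forms η³ and η = ξ₁(H) η¹ satisfy η³∧dη³ = 0, η∧dη = 0 and the
compatibility condition (η³ + η) ∧ d(η³ + η) = 0. -/
theorem bi_hamiltonian_structure (f : Pt → ℝ) (hf : ContDiff ℝ (⊤ : ℕ∞) f)
    (hy : ∀ q, pdy f q = 0) (H : Pt → ℝ) (hH : ContDiff ℝ (⊤ : ℕ∞) H)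
    (hHy : ∀ q, pdy H q = 0) (hne : ∀ q, vderiv (ξ1 f) H q ≠ 0) :
    (∀ q, vderiv (ξ1 f) H q • ξ2 q = crossg f ξ3 (grad f H) q) ∧
    ((∀ q, grad f (fun r => -r.2.2 / 2) q = (-(f q)) • ξ1 f q - ξ3 q) ∧
      (∀ q, vderiv (ξ1 f) H q • ξ2 q
        = crossg f (fun r => vderiv (ξ1 f) H r • ξ1 f r)
            (grad f (fun r => -r.2.2 / 2)) q)) ∧
    ((∀ q, w12 (η3 f) (d1 (η3 f)) q = 0) ∧
      (∀ q, w12 (fun r => vderiv (ξ1 f) H r • η1 r)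
              (d1 (fun r => vderiv (ξ1 f) H r • η1 r)) q = 0) ∧
      (∀ q, w12 (fun r => η3 f r + vderiv (ξ1 f) H r • η1 r)
              (d1 (fun r => η3 f r + vderiv (ξ1 f) H r • η1 r)) q = 0)) :=
  bi_hamiltonian_structure_general f hf hy H hH hHy
end
end
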